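/- If the Chow motive of a smooth projective variety X decomposes as a finite direct sum of Tate twists of the unit motive plus a summand of the form (Z, r, m) with Z a smooth projective surface, and if Voevodsky's nilpotence conjecture holds for surfaces and for the point, then Voevodsky's nilpotence conjecture V(X) holds. -/

import Mathlib

/-- If the rational Chow motive of `X` decomposes as a finite direct sum of Tate
twists of the unit motive plus a direct summand `(Z, r, m)` of the (twisted) motive
of a smooth projective surface, and Voevodsky's nilpotence conjecture `V` holds
for surfaces and for the point (hence for the Tate twists of the unit motive and
for the surface part), then `V(X)` holds.  Motives up to isomorphism with `⊕` are
modeled by an additive commutative monoid `M`; `V` is stable under direct sums and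
direct summands. -/
theorem V_of_motivic_decomposition (M : Type*) [AddCommMonoid M]
    (V : M → Prop)
    (hadd : ∀ a b : M, V a → V b → V (a + b))
    (hsummand : ∀ a b : M, V (a + b) → V a)
    {ι : Type*} (s : Finset ι) (tate : ι → M) (htate : ∀ i ∈ s, V (tate i))
    (hZtw : M) (hVZ : V hZtw)
    (hX w w' : M)
    (hdec : hX = (∑ i ∈ s, tate i) + w)
    (hw : w + w' = hZtw) :
    V hX := by
  have hVw : V w := hsummand w w' (hw ▸ hVZ)
  -- `0` is a direct summand of `w`; this covers an empty family of Tate twists.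
  have hV0 : V 0 := hsummand 0 w (by rwa [zero_add])
  have hVtate : V (∑ i ∈ s, tate i) := Finset.sum_induction tate V hadd hV0 htate
  exact hdec ▸ hadd _ _ hVtate hVw
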